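/- Let U be the unit cube in Mat_{m×n}(𝔽((X^{-1}))) and μ the normalized Haar measure. For q ∈ 𝔽[X]^m and ε > 0, let B(q,ε) = {A ∈ U : ‖qA‖ < ε}, where ‖·‖ denotes distance to the nearest vector in 𝔽[X]^n. If m ≥ 2 and q, q' ∈ 𝔽[X]^m are linearly independent over 𝔽((X^{-1})), then μ(B(q,ε) ∩ B(q',ε')) = μ(B(q,ε))·μ(B(q',ε')). -/

import Mathlib

open Polynomial MeasureTheory Filter Set
open scoped Classical

noncomputable section

namespace FFapprox

variable {F : Type*} [Field F] [Fintype F]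

/-- The absolute value on `𝔽((X⁻¹))`, modelled as `LaurentSeries F` in the
variable `T = X⁻¹`: `|f| = k^(deg_X f) = k^(-order_T f)`. -/
def fabs (f : LaurentSeries F) : ℝ :=
  if f = 0 then 0 else (Fintype.card F : ℝ) ^ (-f.order)

lemma fabs_nonneg (f : LaurentSeries F) : 0 ≤ fabs f := by
  unfold fabs; split
  · exact le_refl 0
  · positivity

lemma one_le_cardF : (1 : ℝ) ≤ (Fintype.card F : ℝ) := by
  exact_mod_cast Fintype.card_pos

lemma fabs_zero : fabs (0 : LaurentSeries F) = 0 := if_pos rfl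

lemma fabs_neg (f : LaurentSeries F) : fabs (-f) = fabs f := by
  unfold fabs
  rw [HahnSeries.order_neg, neg_eq_zero]

lemma fabs_add_le (f g : LaurentSeries F) :
    fabs (f + g) ≤ max (fabs f) (fabs g) := by
  rcases eq_or_ne f 0 with rfl | hf
  · simp [fabs_zero, le_max_iff, le_refl]
  rcases eq_or_ne g 0 with rfl | hg
  · simp [fabs_zero, le_max_iff, le_refl]
  rcases eq_or_ne (f + g) 0 with hfg | hfg
  · rw [hfg, fabs_zero]
    exact le_max_of_le_left (fabs_nonneg f)
  have horder := HahnSeries.min_order_le_order_add hfg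
  unfold fabs
  rw [if_neg hf, if_neg hg, if_neg hfg, le_max_iff]
  rcases min_le_iff.mp (le_refl (min f.order g.order)) with h | h
  · rcases le_or_gt f.order g.order with hle | hlt
    · left
      refine zpow_le_zpow_right₀ one_le_cardF ?_
      simp only [neg_le_neg_iff]
      exact le_trans (by simp [min_eq_left hle]) horder
    · right
      refine zpow_le_zpow_right₀ one_le_cardF ?_
      simp only [neg_le_neg_iff]
      exact le_trans (by simp [min_eq_right hlt.le]) horder
  · rcases le_or_gt f.order g.order with hle | hlt
    · left
      refine zpow_le_zpow_right₀ one_le_cardF ?_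
      simp only [neg_le_neg_iff]
      exact le_trans (by simp [min_eq_left hle]) horder
    · right
      refine zpow_le_zpow_right₀ one_le_cardF ?_
      simp only [neg_le_neg_iff]
      exact le_trans (by simp [min_eq_right hlt.le]) horder

instance : MetricSpace (LaurentSeries F) where
  dist f g := fabs (f - g)
  dist_self f := by simp [fabs_zero]
  dist_comm f g := by
    have : g - f = -(f - g) := by ring
    show fabs (f - g) = fabs (g - f)
    rw [this, fabs_neg]
  dist_triangle f g h := by
    have : f - h = (f - g) + (g - h) := by ring
    show fabs (f - h) ≤ fabs (f - g) + fabs (g - h)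
    rw [this]
    refine le_trans (fabs_add_le _ _) ?_
    rw [max_le_iff]
    constructor
    · exact le_add_of_nonneg_right (fabs_nonneg _)
    · exact le_add_of_nonneg_left (fabs_nonneg _)
  eq_of_dist_eq_zero := by
    intro f g hfg
    by_contra hne
    have hsub : f - g ≠ 0 := sub_ne_zero.mpr hne
    change fabs (f - g) = 0 at hfg
    unfold fabs at hfg
    rw [if_neg hsub] at hfg
    have : (0:ℝ) < (Fintype.card F : ℝ) ^ (-(f-g).order) := by positivity
    linarith

instance : MeasurableSpace (LaurentSeries F) := borel _

instance : BorelSpace (LaurentSeries F) := ⟨rfl⟩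

/-- The embedding of `𝔽[X]` into `𝔽((X⁻¹))`, sending `X` to `T⁻¹`. -/
def pe : Polynomial F →ₐ[F] LaurentSeries F :=
  Polynomial.aeval (HahnSeries.single (-1 : ℤ) (1 : F))

/-- `|q| = k^(deg q)` on polynomials. -/
def pabs (q : Polynomial F) : ℝ :=
  if q = 0 then 0 else (Fintype.card F : ℝ) ^ q.natDegree

/-- sup-norm of a polynomial vector. -/
def qnorm {m : ℕ} (q : Fin m → Polynomial F) : ℝ := ⨆ i, pabs (q i)

/-- sup-norm of a vector of Laurent series. -/
def vnorm {n : ℕ} (v : Fin n → LaurentSeries F) : ℝ := ⨆ i, fabs (v i)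

/-- sup-norm of a matrix. -/
def mnorm {m n : ℕ} (A : Fin m → Fin n → LaurentSeries F) : ℝ := ⨆ i, vnorm (A i)

/-- Distance of a vector to the nearest polynomial vector. -/
def pdist {n : ℕ} (v : Fin n → LaurentSeries F) : ℝ :=
  ⨅ p : Fin n → Polynomial F, vnorm (fun i => v i - pe (p i))

/-- matrix product `q A` of a polynomial row vector with a Laurent-series matrix. -/
def mulVec {m n : ℕ} (q : Fin m → Polynomial F) (A : Fin m → Fin n → LaurentSeries F) :
    Fin n → LaurentSeries F :=
  fun j => ∑ i, pe (q i) * A i j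

/-- The unit cube in the space of `m × n` matrices. -/
def U (F : Type*) [Field F] [Fintype F] (m n : ℕ) : Set (Fin m → Fin n → LaurentSeries F) :=
  {A | ∀ i j, fabs (A i j) < 1}

/-- The exponent of convergence `v(S)`. -/
def expConv {m : ℕ} (S : Set (Fin m → Polynomial F)) : ℝ :=
  sInf {v : ℝ | Summable fun q : S => qnorm (q : Fin m → Polynomial F) ^ (-v)}

/-- The set `W_S(m,n;ψ)`. -/
def WS {m n : ℕ} (S : Set (Fin m → Polynomial F))
    (ψ : (Fin m → Polynomial F) → ℝ) : Set (Fin m → Fin n → LaurentSeries F) :=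
  {A | {q ∈ S | pdist (mulVec q A) < ψ q}.Infinite}


open scoped ENNReal NNReal

/-- The polynomial Euler totient `Φ(q)`. -/
def Phi (q : Polynomial F) : ℕ :=
  Nat.card {q' : Polynomial F // pabs q' < pabs q ∧ q'.Monic ∧ IsCoprime q q'}

/-- The unit cube in `𝔽((X⁻¹))ⁿ`. -/
def U1 (F : Type*) [Field F] [Fintype F] (n : ℕ) : Set (Fin n → LaurentSeries F) :=
  {A | ∀ i, fabs (A i) < 1}

/-- `B(q,ε) = {A ∈ U : ‖qA‖ < ε}`. -/
def BallB {m n : ℕ} (q : Fin m → Polynomial F) (ε : ℝ) :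
    Set (Fin m → Fin n → LaurentSeries F) :=
  {A ∈ U F m n | pdist (mulVec q A) < ε}

/-- `B'(q,ε)` (one-dimensional case, with coprimality). -/
def BallB' {n : ℕ} (q : Polynomial F) (ε : ℝ) : Set (Fin n → LaurentSeries F) :=
  {A ∈ U1 F n | ∃ p : Fin n → Polynomial F, (∀ i, IsCoprime q (p i)) ∧
    vnorm (fun i => pe q * A i - pe (p i)) < ε}

/-- gcd of the coordinates of a polynomial vector. -/
def gcdv {m : ℕ} (q : Fin m → Polynomial F) : Polynomial F := Finset.univ.gcd q

/-- `B''(q,ε)` (higher-dimensional case, with coprimality to the gcd of coordinates). -/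
def BallB'' {m n : ℕ} (q : Fin m → Polynomial F) (ε : ℝ) :
    Set (Fin m → Fin n → LaurentSeries F) :=
  {A ∈ U F m n | ∃ p : Fin n → Polynomial F, (∀ j, IsCoprime (gcdv q) (p j)) ∧
    vnorm (fun j => mulVec q A j - pe (p j)) < ε}

/-- The resonant affine subspace `H(q,p) = {A ∈ U : qA = p}`. -/
def Hqp {m n : ℕ} (q : Fin m → Polynomial F) (p : Fin n → Polynomial F) :
    Set (Fin m → Fin n → LaurentSeries F) :=
  {A ∈ U F m n | mulVec q A = fun j => pe (p j)}

/-- The counting function `C(N;S)`. -/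
def CountS {m : ℕ} (S : Set (Fin m → Polynomial F)) (N : ℕ) : ℕ :=
  Nat.card {q : Fin m → Polynomial F // q ∈ S ∧ qnorm q ≤ N}

/-- The growth exponent `γ(S)`. -/
def gammaS {m : ℕ} (S : Set (Fin m → Polynomial F)) : ℝ :=
  sSup {γ : ℝ | 0 < Filter.atTop.limsup (fun N : ℕ => (CountS S N : ℝ≥0∞) * (N : ℝ≥0∞) ^ (-γ))}

/-- The exponent `η(ψ)`. -/
def etaExp {m : ℕ} (n : ℕ) (ψ : (Fin m → Polynomial F) → ℝ) : ℝ :=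
  sInf {η : ℝ | Summable (fun q : Fin m → Polynomial F => qnorm q ^ n * (ψ q / qnorm q) ^ η)}

/-- The exponent of convergence of `S ⊆ 𝔽[X]` (one-dimensional). -/
def expConv1 (S : Set (Polynomial F)) : ℝ :=
  sInf {v : ℝ | Summable fun q : S => pabs (q : Polynomial F) ^ (-v)}

end FFapprox

/-!
Write `T = X⁻¹`. Since `|·|` takes values in `{0} ∪ k^ℤ`, there is a `d` such that `‖v‖ < ε` iff
the coefficients of `T, …, T^d` vanish in every coordinate of `v`. So `B(q,ε)` is the fibre over `0`
of the additive map "digits of `qA` at `T, …, T^d`" from the additive group `U` to a finite group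
`G`. When this map is onto, its fibres are translates of each other inside `U`, so translation
invariance gives `μ B(q,ε) = 1/|G|`. Linear independence of `q, q'` gives a right inverse of the
`2 × m` matrix with rows `q, q'`, which makes the joint digit map of `q` and `q'` onto `G × G'`;
hence `μ (B(q,ε) ∩ B(q',ε')) = 1/(|G||G'|)`.
-/

theorem Matrix.exists_mul_eq_one_of_linearIndependent_row {K ι κ : Type*} [Field K]
    [Fintype ι] [DecidableEq ι] [Fintype κ] (M : Matrix ι κ K)
    (hM : LinearIndependent K M.row) : ∃ B : Matrix κ ι K, M * B = 1 := by
  rw [← Matrix.mulVec_surjective_iff_exists_right_inverse, ← Matrix.coe_mulVecLin,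
    ← LinearMap.range_eq_top]
  apply Submodule.eq_top_of_finrank_eq
  rw [← Matrix.rank, hM.rank_matrix, Module.finrank_fintype_fun_eq_card]

namespace FFapprox

variable {F : Type*} [Field F]

lemma pe_monomial (d : ℕ) (a : F) : pe (monomial d a) = HahnSeries.single (-(d : ℤ)) a := by
  rw [pe, aeval_monomial, HahnSeries.single_pow, one_pow, nsmul_eq_mul, mul_neg, mul_one,
    HahnSeries.algebraMap_apply', PowerSeries.algebraMap_apply, Algebra.algebraMap_self,
    RingHom.id_apply, HahnSeries.ofPowerSeries_C, HahnSeries.C_apply,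
    HahnSeries.single_mul_single, zero_add, mul_one]

lemma coeff_pe_of_pos (p : F[X]) {t : ℤ} (ht : 0 < t) : (pe p).coeff t = 0 := by
  induction p using Polynomial.induction_on' with
  | add p p' hp hp' => rw [map_add, HahnSeries.coeff_add, hp, hp', add_zero]
  | monomial d a => rw [pe_monomial, HahnSeries.coeff_single, if_neg (by omega)]

lemma exists_coeff_pe_eq (f : LaurentSeries F) :
    ∃ p : F[X], ∀ t ≤ 0, (pe p).coeff t = f.coeff t := by
  refine ⟨∑ s ∈ Finset.Icc f.order 0, monomial (-s).toNat (f.coeff s), fun t ht => ?_⟩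
  have hsingle : ∀ s ∈ Finset.Icc f.order 0,
      pe (monomial (-s).toNat (f.coeff s)) = HahnSeries.single s (f.coeff s) := by
    intro s hs
    rw [pe_monomial, show -((-s).toNat : ℤ) = s by grind]
  rw [map_sum, Finset.sum_congr rfl hsingle, HahnSeries.coeff_sum]
  simp only [HahnSeries.coeff_single]
  rw [Finset.sum_eq_single t (fun s _ hst => by simp [hst.symm]) fun hmem => ?_]
  · simp
  · have : t < f.order := by grind
    simp [HahnSeries.coeff_eq_zero_of_lt_order this]

lemma coeff_mulVec_sub_pe {m n : ℕ} (q : Fin m → F[X]) (A : Fin m → Fin n → LaurentSeries F)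
    (P : Fin m → Fin n → F[X]) (j : Fin n) {t : ℤ} (ht : 0 < t) :
    (mulVec q (A - fun i j => pe (P i j)) j).coeff t = (mulVec q A j).coeff t := by
  have : mulVec q (A - fun i j => pe (P i j)) j = mulVec q A j - pe (∑ i, q i * P i j) := by
    simp [mulVec, mul_sub, map_sum]
  rw [this, HahnSeries.coeff_sub, coeff_pe_of_pos _ ht, sub_zero]

def fracDigits {m n : ℕ} (q : Fin m → F[X]) (D : ℕ) :
    (Fin m → Fin n → LaurentSeries F) →+ (Fin n → Fin D → F) where
  toFun A j s := (mulVec q A j).coeff (s + 1)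
  map_zero' := by ext; simp [mulVec]
  map_add' A B := by ext; simp [mulVec, mul_add, Finset.sum_add_distrib]

@[simp]
lemma fracDigits_apply {m n : ℕ} (q : Fin m → F[X]) (D : ℕ) (A : Fin m → Fin n → LaurentSeries F)
    (j : Fin n) (s : Fin D) : fracDigits q D A j s = (mulVec q A j).coeff (s + 1) :=
  rfl

lemma coeff_sum_single_succ {D : ℕ} (c : Fin D → F) (s : Fin D) :
    (∑ s' : Fin D, HahnSeries.single ((s' : ℤ) + 1) (c s')).coeff ((s : ℤ) + 1) = c s := by
  simp [HahnSeries.coeff_sum, HahnSeries.coeff_single, Fin.val_inj]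

/-- The Borel structure on `LaurentSeries F` is that of Mathlib's `X`-adic uniformity, not of the
metric `fabs`; the coefficients are uniformly continuous for it. -/
lemma measurableSet_coeff_eq (t : ℤ) (a : F) :
    MeasurableSet {f : LaurentSeries F | f.coeff t = a} := by
  let _ : UniformSpace F := ⊥
  have : DiscreteTopology F := ⟨rfl⟩
  exact ((isOpen_discrete {a}).preimage
    (LaurentSeries.uniformContinuous_coeff t).continuous).measurableSet

variable [Fintype F]

lemma one_lt_card : (1 : ℝ) < Fintype.card F := by
  exact_mod_cast Fintype.one_lt_card

lemma fabs_lt_zpow_iff (f : LaurentSeries F) (z : ℤ) :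
    fabs f < (Fintype.card F : ℝ) ^ z ↔ ∀ t ≤ -z, f.coeff t = 0 := by
  rcases eq_or_ne f 0 with rfl | hf
  · simp only [fabs_zero, HahnSeries.coeff_zero, implies_true, iff_true]
    positivity
  rw [fabs, if_neg hf, zpow_lt_zpow_iff_right₀ one_lt_card]
  constructor
  · exact fun h t ht => HahnSeries.coeff_eq_zero_of_lt_order (by omega)
  · intro h
    by_contra! hle
    exact hf (HahnSeries.coeff_order_eq_zero.mp (h _ (by omega)))

lemma exists_fabs_lt_iff {ε : ℝ} (hε : 0 < ε) :
    ∃ d : ℤ, ∀ f : LaurentSeries F, fabs f < ε ↔ ∀ t ≤ d, f.coeff t = 0 := by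
  obtain ⟨z, hzε, hεz⟩ := exists_mem_Ioc_zpow hε (one_lt_card (F := F))
  refine ⟨-(z + 1), fun f => ?_⟩
  rw [← fabs_lt_zpow_iff]
  refine ⟨fun h => h.trans_le hεz, fun h => ?_⟩
  rcases eq_or_ne f 0 with rfl | hf
  · rwa [fabs_zero]
  rw [fabs, if_neg hf] at h ⊢
  rw [zpow_lt_zpow_iff_right₀ one_lt_card, Int.lt_add_one_iff] at h
  exact (zpow_le_zpow_right₀ one_lt_card.le h).trans_lt hzε

lemma fabs_lt_one_iff (f : LaurentSeries F) : fabs f < 1 ↔ ∀ t ≤ 0, f.coeff t = 0 := by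
  simpa using fabs_lt_zpow_iff f 0

lemma le_vnorm {n : ℕ} (v : Fin n → LaurentSeries F) (j : Fin n) : fabs (v j) ≤ vnorm v :=
  le_ciSup (f := fun j => fabs (v j)) (Set.finite_range _).bddAbove j

lemma vnorm_lt_of_forall_lt {n : ℕ} {v : Fin n → LaurentSeries F} {ε : ℝ} (hε : 0 < ε)
    (h : ∀ j, fabs (v j) < ε) : vnorm v < ε := by
  rcases isEmpty_or_nonempty (Fin n) with _ | _
  · rwa [vnorm, Real.iSup_of_isEmpty]
  · obtain ⟨j, hj⟩ := exists_eq_ciSup_of_finite (f := fun j => fabs (v j))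
    rw [vnorm, ← hj]
    exact h j

lemma pdist_lt_iff {n : ℕ} {ε : ℝ} (hε : 0 < ε) (v : Fin n → LaurentSeries F) :
    pdist v < ε ↔ ∀ j, ∃ p : F[X], fabs (v j - pe p) < ε := by
  have hbdd : BddBelow (range fun p : Fin n → F[X] => vnorm fun j => v j - pe (p j)) :=
    ⟨0, Set.forall_mem_range.2 fun p => Real.iSup_nonneg fun j => fabs_nonneg _⟩
  rw [pdist, ciInf_lt_iff hbdd, Classical.skolem]
  exact exists_congr fun p => ⟨fun h j => (le_vnorm _ j).trans_lt h, vnorm_lt_of_forall_lt hε⟩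

lemma exists_fabs_sub_pe_lt_iff {ε : ℝ} {d : ℤ}
    (hd : ∀ f : LaurentSeries F, fabs f < ε ↔ ∀ t ≤ d, f.coeff t = 0) (f : LaurentSeries F) :
    (∃ p : F[X], fabs (f - pe p) < ε) ↔ ∀ t, 0 < t → t ≤ d → f.coeff t = 0 := by
  simp_rw [hd, HahnSeries.coeff_sub]
  constructor
  · rintro ⟨p, hp⟩ t ht htd
    simpa [coeff_pe_of_pos p ht] using hp t htd
  · intro h
    obtain ⟨p, hp⟩ := exists_coeff_pe_eq f
    refine ⟨p, fun t htd => ?_⟩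
    rcases le_or_gt t 0 with ht | ht
    · rw [hp t ht, sub_self]
    · rw [coeff_pe_of_pos p ht, sub_zero, h t ht htd]

lemma BallB_eq_inter_fracDigits_preimage {m n : ℕ} (q : Fin m → F[X]) {ε : ℝ} {d : ℤ}
    (hd : ∀ f : LaurentSeries F, fabs f < ε ↔ ∀ t ≤ d, f.coeff t = 0) :
    BallB (n := n) q ε = U F m n ∩ fracDigits q d.toNat ⁻¹' {0} := by
  have hε : 0 < ε := by simpa [fabs_zero] using (hd 0).2 (by simp)
  ext A
  simp only [BallB, mem_ofPred_eq, mem_inter_iff, mem_preimage, mem_singleton_iff,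
    pdist_lt_iff hε, exists_fabs_sub_pe_lt_iff hd, funext_iff, fracDigits_apply, Pi.zero_apply]
  refine and_congr_right fun _ => forall_congr' fun j => ⟨fun h s => ?_, fun h t ht htd => ?_⟩
  · exact h _ (by omega) (by have := s.2; omega)
  · obtain ⟨s, rfl⟩ : ∃ s : ℕ, t = s + 1 := ⟨(t - 1).toNat, by omega⟩
    exact h ⟨s, by omega⟩

variable {m n : ℕ} {q q' : Fin m → F[X]}

lemma exists_mem_U_coeff_mulVec_eq
    (hli : LinearIndependent (LaurentSeries F)
      ![(fun i => pe (q i) : Fin m → LaurentSeries F), fun i => pe (q' i)])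
    (u u' : Fin n → LaurentSeries F) :
    ∃ A ∈ U F m n, ∀ j, ∀ t > 0,
      (mulVec q A j).coeff t = (u j).coeff t ∧ (mulVec q' A j).coeff t = (u' j).coeff t := by
  obtain ⟨B, hB⟩ := Matrix.exists_mul_eq_one_of_linearIndependent_row
    (Matrix.of ![fun i => pe (q i), fun i => pe (q' i)]) hli
  have hprod : Matrix.of ![fun i => pe (q i), fun i => pe (q' i)] * (B * Matrix.of ![u, u'])
      = Matrix.of ![u, u'] := by
    rw [← Matrix.mul_assoc, hB, Matrix.one_mul]
  set A₀ : Fin m → Fin n → LaurentSeries F := fun i j => (B * Matrix.of ![u, u']) i j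
  have hA₀ : ∀ j, mulVec q A₀ j = u j ∧ mulVec q' A₀ j = u' j := fun j =>
    ⟨congrFun (congrFun hprod 0) j, congrFun (congrFun hprod 1) j⟩
  choose P hP using fun i j => exists_coeff_pe_eq (A₀ i j)
  refine ⟨A₀ - fun i j => pe (P i j), fun i j => (fabs_lt_one_iff _).2 fun t ht => ?_,
    fun j t ht => ?_⟩
  · simp [HahnSeries.coeff_sub, hP i j t ht]
  · rw [coeff_mulVec_sub_pe _ _ _ _ ht, coeff_mulVec_sub_pe _ _ _ _ ht, (hA₀ j).1, (hA₀ j).2]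
    exact ⟨rfl, rfl⟩

lemma exists_mem_U_fracDigits_eq
    (hli : LinearIndependent (LaurentSeries F)
      ![(fun i => pe (q i) : Fin m → LaurentSeries F), fun i => pe (q' i)])
    {D D' : ℕ} (g : Fin n → Fin D → F) (g' : Fin n → Fin D' → F) :
    ∃ A ∈ U F m n, fracDigits q D A = g ∧ fracDigits q' D' A = g' := by
  obtain ⟨A, hA, hcoeff⟩ := exists_mem_U_coeff_mulVec_eq hli
    (fun j => ∑ s : Fin D, HahnSeries.single ((s : ℤ) + 1) (g j s))
    (fun j => ∑ s : Fin D', HahnSeries.single ((s : ℤ) + 1) (g' j s))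
  refine ⟨A, hA, ?_, ?_⟩ <;> ext j s
  · rw [fracDigits_apply, (hcoeff j _ (by omega)).1, coeff_sum_single_succ]
  · rw [fracDigits_apply, (hcoeff j _ (by omega)).2, coeff_sum_single_succ]

lemma measurableSet_U : MeasurableSet (U F m n) := by
  have : U F m n = ⋂ (i) (j) (t : ℤ) (_ : t ≤ 0),
      (fun A : Fin m → Fin n → LaurentSeries F => A i j) ⁻¹' {f | f.coeff t = 0} := by
    ext A
    simp [U, fabs_lt_one_iff]
  rw [this]
  exact .iInter fun i => .iInter fun j => .iInter fun t => .iInter fun _ =>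
    ((measurable_pi_apply i).eval (a := j)) (measurableSet_coeff_eq t 0)

lemma measurableSet_coeff_mulVec_eq (q : Fin m → F[X]) (j : Fin n) (t : ℤ) (c : F) :
    MeasurableSet {A : Fin m → Fin n → LaurentSeries F | (mulVec q A j).coeff t = c} := by
  let _ : MeasurableSpace F := ⊤
  have hterm : ∀ i, Measurable fun A : Fin m → Fin n → LaurentSeries F =>
      (pe (q i) * A i j).coeff t := fun i =>
    measurable_to_countable' fun a => ((continuous_const_mul (pe (q i))).measurable.comp
      ((measurable_pi_apply i).eval (a := j))) (measurableSet_coeff_eq t a)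
  have : Measurable fun A : Fin m → Fin n → LaurentSeries F => (mulVec q A j).coeff t := by
    simpa [mulVec, HahnSeries.coeff_sum] using Finset.measurable_sum Finset.univ fun i _ => hterm i
  exact this (t := {c}) MeasurableSpace.measurableSet_top

lemma measurableSet_fracDigits_preimage (q : Fin m → F[X]) {D : ℕ} (g : Fin n → Fin D → F) :
    MeasurableSet (fracDigits q D ⁻¹' {g}) := by
  have : fracDigits q D ⁻¹' {g} =
      ⋂ (j) (s : Fin D), {A | (mulVec q A j).coeff (s + 1) = g j s} := by
    ext A
    simp [funext_iff]
  rw [this]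
  exact .iInter fun j => .iInter fun s => measurableSet_coeff_mulVec_eq q j _ _

theorem _root_.MeasureTheory.Measure.card_mul_measure_inter_preimage_zero {M G : Type*}
    [AddGroup M] [MeasurableSpace M] [MeasurableAdd M] [AddGroup G] [Fintype G]
    (μ : Measure M) [μ.IsAddLeftInvariant] (H : AddSubgroup M) (Φ : M →+ G)
    (hmeas : ∀ g, MeasurableSet ((H : Set M) ∩ Φ ⁻¹' {g})) (hsurj : ∀ g, ∃ x ∈ H, Φ x = g) :
    Fintype.card G * μ (H ∩ Φ ⁻¹' {0}) = μ H := by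
  have htrans : ∀ g, μ (H ∩ Φ ⁻¹' {g}) = μ (H ∩ Φ ⁻¹' {0}) := by
    intro g
    obtain ⟨x, hxH, rfl⟩ := hsurj g
    rw [← measure_preimage_add μ x]
    congr 1
    ext y
    simp [H.add_mem_cancel_left hxH]
  have hdisj : Pairwise fun g g' => Disjoint ((H : Set M) ∩ Φ ⁻¹' {g}) (H ∩ Φ ⁻¹' {g'}) :=
    fun g g' hgg' => (pairwise_disjoint_fiber Φ hgg').mono inter_subset_right inter_subset_right
  calc Fintype.card G * μ (H ∩ Φ ⁻¹' {0}) = ∑ g, μ (H ∩ Φ ⁻¹' {g}) := by simp [htrans]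
    _ = μ (⋃ g, (H : Set M) ∩ Φ ⁻¹' {g}) := by rw [measure_iUnion hdisj hmeas, tsum_fintype]
    _ = μ H := by congr 1; ext; simp

def unitCube (m n : ℕ) : AddSubgroup (Fin m → Fin n → LaurentSeries F) where
  carrier := U F m n
  zero_mem' _ _ := by simp [fabs_zero]
  add_mem' hA hB i j := (fabs_add_le _ _).trans_lt (max_lt (hA i j) (hB i j))
  neg_mem' hA i j := by simpa [fabs_neg] using hA i j

lemma measure_U_inter_preimage_zero (μ : Measure (Fin m → Fin n → LaurentSeries F))
    [μ.IsAddLeftInvariant] (hU : μ (U F m n) = 1) {G : Type*} [AddGroup G] [Fintype G]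
    (Φ : (Fin m → Fin n → LaurentSeries F) →+ G) (hΦ : ∀ g, MeasurableSet (Φ ⁻¹' {g}))
    (hsurj : ∀ g, ∃ A ∈ U F m n, Φ A = g) :
    μ (U F m n ∩ Φ ⁻¹' {0}) = (Fintype.card G : ENNReal)⁻¹ := by
  have := μ.card_mul_measure_inter_preimage_zero (unitCube m n) Φ
    (fun g => measurableSet_U.inter (hΦ g)) hsurj
  exact ENNReal.eq_inv_of_mul_eq_one_left (by rw [mul_comm]; exact this.trans hU)

theorem ball_independence_general {m n : ℕ}
    (μ : Measure (Fin m → Fin n → LaurentSeries F)) (hinv : μ.IsAddLeftInvariant)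
    (hU : μ (U F m n) = 1)
    (q q' : Fin m → Polynomial F)
    (hli : LinearIndependent (LaurentSeries F)
      ![(fun i => pe (q i) : Fin m → LaurentSeries F), fun i => pe (q' i)])
    (ε ε' : ℝ) (hε : 0 < ε) (hε' : 0 < ε') :
    μ (BallB (n := n) q ε ∩ BallB q' ε') = μ (BallB (n := n) q ε) * μ (BallB (n := n) q' ε') := by
  obtain ⟨d, hd⟩ := exists_fabs_lt_iff (F := F) hε
  obtain ⟨d', hd'⟩ := exists_fabs_lt_iff (F := F) hε'
  set Φ := fracDigits (n := n) q d.toNat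
  set Φ' := fracDigits (n := n) q' d'.toNat
  have hinter : U F m n ∩ Φ ⁻¹' {0} ∩ (U F m n ∩ Φ' ⁻¹' {0}) =
      U F m n ∩ (Φ.prod Φ') ⁻¹' {0} := by
    ext A
    simp only [mem_inter_iff, mem_preimage, mem_singleton_iff, AddMonoidHom.prod_apply,
      Prod.mk_eq_zero]
    tauto
  have hmeas : ∀ g, MeasurableSet ((Φ.prod Φ') ⁻¹' {g}) := fun g => by
    rw [show (Φ.prod Φ') ⁻¹' {g} = Φ ⁻¹' {g.1} ∩ Φ' ⁻¹' {g.2} by ext; simp [Prod.ext_iff]]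
    exact (measurableSet_fracDigits_preimage q _).inter (measurableSet_fracDigits_preimage q' _)
  have hsurj := exists_mem_U_fracDigits_eq hli (n := n) (D := d.toNat) (D' := d'.toNat)
  rw [BallB_eq_inter_fracDigits_preimage q hd, BallB_eq_inter_fracDigits_preimage q' hd', hinter,
    measure_U_inter_preimage_zero μ hU Φ (measurableSet_fracDigits_preimage q)
      fun g => (hsurj g 0).imp fun _ hA => ⟨hA.1, hA.2.1⟩,
    measure_U_inter_preimage_zero μ hU Φ' (measurableSet_fracDigits_preimage q')
      fun g' => (hsurj 0 g').imp fun _ hA => ⟨hA.1, hA.2.2⟩,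
    measure_U_inter_preimage_zero μ hU (Φ.prod Φ') hmeas
      fun g => (hsurj g.1 g.2).imp fun _ hA => ⟨hA.1, Prod.ext hA.2.1 hA.2.2⟩,
    Fintype.card_prod, Nat.cast_mul, ENNReal.mul_inv (by simp) (by simp)]

/-- independence of the sets `B(q,ε)` for linearly independent `q, q'`. -/
theorem ball_independence {m n : ℕ} (hm : 2 ≤ m) (hn : 0 < n)
    (μ : Measure (Fin m → Fin n → LaurentSeries F)) (hinv : μ.IsAddLeftInvariant)
    (hU : μ (U F m n) = 1)
    (q q' : Fin m → Polynomial F)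
    (hli : LinearIndependent (LaurentSeries F)
      ![(fun i => pe (q i) : Fin m → LaurentSeries F), fun i => pe (q' i)])
    (ε ε' : ℝ) (hε : 0 < ε) (hε' : 0 < ε') :
    μ (BallB (n := n) q ε ∩ BallB q' ε') = μ (BallB (n := n) q ε) * μ (BallB (n := n) q' ε') :=
  ball_independence_general μ hinv hU q q' hli ε ε' hε hε'

end FFapprox
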